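/- Let m : ℕ and c : Fin m → ℝ be such that every c j is a half-integer. Define q_c : ℂ → ℂ by q_c(λ) = tanh(πλ) · ∏_j (λ² + (c j)²). Then for every integer k, the function λ ↦ (λ − i·(k+1/2))·q_c(λ) tends, as λ → i·(k+1/2) within the punctured neighborhood, to (1/π) · ∏_j ((c j)² − (k+1/2)²). In other words, the residue of q_c at i·(k+1/2) equals (1/π)·∏_j ((c j)² − (k+1/2)²). -/

import Mathlib

open Complex Real Finset Filter Topology

/-- Residue of the tanh-type Plancherel density
`q_c(λ) = tanh(πλ) · ∏_j (λ² + (c j)²)` (with all `c j` half-integers) at the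
point `i(k+1/2)`: the function `λ ↦ (λ − i(k+1/2))·q_c(λ)` tends to
`(1/π) · ∏_j ((c j)² − (k+1/2)²)` as `λ → i(k+1/2)` within the punctured
neighborhood. -/
theorem residue_of_tanh_type_plancherel_density (m : ℕ) (c : Fin m → ℝ)
    (hc : ∀ j, ∃ k : ℤ, c j = k + 1 / 2) (k : ℤ) :
    Filter.Tendsto
      (fun l : ℂ => (l - Complex.I * ((k : ℂ) + 1 / 2)) *
        (Complex.tanh (Real.pi * l) * ∏ j, (l ^ 2 + (c j : ℂ) ^ 2)))
      (𝓝[≠] (Complex.I * ((k : ℂ) + 1 / 2)))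
      (𝓝 ((1 / (Real.pi : ℂ)) * ∏ j, ((c j : ℂ) ^ 2 - ((k : ℂ) + 1 / 2) ^ 2))) := by
  set l₀ : ℂ := Complex.I * ((k : ℂ) + 1 / 2) with hl₀
  have hπ : (Real.pi : ℂ) ≠ 0 := by
    exact_mod_cast Real.pi_ne_zero
  have hcosh0 : Complex.cosh ((Real.pi : ℂ) * l₀) = 0 := by
    have h1 : (Real.pi : ℂ) * l₀ = ((Real.pi : ℂ) * ((k : ℂ) + 1 / 2)) * Complex.I := by
      rw [hl₀]; ring
    rw [h1, Complex.cosh_mul_I, Complex.cos_eq_zero_iff]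
    exact ⟨k, by push_cast; ring⟩
  have hsinh : Complex.sinh ((Real.pi : ℂ) * l₀) ≠ 0 := by
    intro h
    have h2 := Complex.cosh_sq_sub_sinh_sq ((Real.pi : ℂ) * l₀)
    rw [hcosh0, h] at h2
    norm_num at h2
  have hd : HasDerivAt (fun z : ℂ => Complex.cosh ((Real.pi : ℂ) * z))
      ((Real.pi : ℂ) * Complex.sinh ((Real.pi : ℂ) * l₀)) l₀ := by
    have := (Complex.hasDerivAt_cosh ((Real.pi : ℂ) * l₀)).comp l₀
      ((hasDerivAt_id l₀).const_mul (Real.pi : ℂ))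
    simpa [Function.comp_def, mul_comm (Complex.sinh _)] using this
  have hslope : Tendsto (fun z : ℂ => Complex.cosh ((Real.pi : ℂ) * z) / (z - l₀))
      (𝓝[≠] l₀) (𝓝 ((Real.pi : ℂ) * Complex.sinh ((Real.pi : ℂ) * l₀))) := by
    have := hasDerivAt_iff_tendsto_slope.mp hd
    simpa [slope_fun_def, hcosh0, div_eq_mul_inv, mul_comm] using this
  have hπs : (Real.pi : ℂ) * Complex.sinh ((Real.pi : ℂ) * l₀) ≠ 0 :=
    mul_ne_zero hπ hsinh
  have ht : Tendsto (fun z : ℂ => (z - l₀) / Complex.cosh ((Real.pi : ℂ) * z))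
      (𝓝[≠] l₀) (𝓝 ((Real.pi : ℂ) * Complex.sinh ((Real.pi : ℂ) * l₀))⁻¹) := by
    have := hslope.inv₀ hπs
    simpa [inv_div] using this
  have hP : Tendsto (fun z : ℂ => Complex.sinh ((Real.pi : ℂ) * z) * ∏ j, (z ^ 2 + (c j : ℂ) ^ 2))
      (𝓝[≠] l₀)
      (𝓝 (Complex.sinh ((Real.pi : ℂ) * l₀) * ∏ j, (l₀ ^ 2 + (c j : ℂ) ^ 2))) := by
    apply Tendsto.mono_left _ nhdsWithin_le_nhds
    exact ((Complex.continuous_sinh.comp (continuous_const.mul continuous_id)).mul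
      (continuous_finset_prod _ fun j _ =>
        (continuous_pow 2).add continuous_const)).continuousAt.tendsto
  have hfun : (fun l : ℂ => (l - l₀) *
        (Complex.tanh ((Real.pi : ℂ) * l) * ∏ j, (l ^ 2 + (c j : ℂ) ^ 2)))
      = fun z : ℂ => ((z - l₀) / Complex.cosh ((Real.pi : ℂ) * z)) *
        (Complex.sinh ((Real.pi : ℂ) * z) * ∏ j, (z ^ 2 + (c j : ℂ) ^ 2)) := by
    funext z
    rw [Complex.tanh_eq_sinh_div_cosh, div_eq_mul_inv, div_eq_mul_inv]
    ring
  have hl₀sq : l₀ ^ 2 = -(((k : ℂ) + 1 / 2) ^ 2) := by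
    rw [hl₀, mul_pow, Complex.I_sq]; ring
  have hval : ((Real.pi : ℂ) * Complex.sinh ((Real.pi : ℂ) * l₀))⁻¹ *
      (Complex.sinh ((Real.pi : ℂ) * l₀) * ∏ j, (l₀ ^ 2 + (c j : ℂ) ^ 2))
      = (1 / (Real.pi : ℂ)) * ∏ j, ((c j : ℂ) ^ 2 - ((k : ℂ) + 1 / 2) ^ 2) := by
    have hprod : (∏ j, (l₀ ^ 2 + (c j : ℂ) ^ 2))
        = ∏ j, ((c j : ℂ) ^ 2 - ((k : ℂ) + 1 / 2) ^ 2) := by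
      refine Finset.prod_congr rfl fun j _ => ?_
      rw [hl₀sq]; ring
    rw [hprod]
    field_simp
    ring_nf
    exact Finset.prod_congr rfl fun _ _ => by ring
  rw [hfun, ← hval]
  exact ht.mul hP
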